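/- For any nonzero a ∈ ℂ, the ℂ-subalgebra A_a of the rational function field ℂ(z) generated by the elements (z^2 - a^2)^k and z(z^2 - a^2)^k for all k ∈ ℤ equals ℂ[z, (z-a)^{-1}, (z+a)^{-1}], and A_a is isomorphic as a ℂ-algebra to R, via the assignment z ↦ a(1 + t + u), (z + a)^{-1} ↦ (t + 2 - u)/(4a), (z - a)^{-1} ↦ (t^{-1}u - 1)/(4a). -/

import Mathlib

noncomputable section

open Polynomial

/-- The polynomial `u² - (t² + 4t)` over the Laurent polynomial ring `ℂ[t,t⁻¹]`. -/
def threePoly : Polynomial (LaurentPolynomial ℂ) :=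
  Polynomial.X ^ 2 - Polynomial.C (LaurentPolynomial.T 2 + 4 * LaurentPolynomial.T 1)

/-- The three-point ring `R = ℂ[t, t⁻¹, u | u² = t² + 4t]`. -/
abbrev R3 : Type := AdjoinRoot threePoly

/-- `t^k` in `R3`, for `k : ℤ`. -/
def tp (k : ℤ) : R3 := AdjoinRoot.of threePoly (LaurentPolynomial.T k)

/-- the element `t` of `R`. -/
def tR : R3 := tp 1

/-- the element `t⁻¹` of `R`. -/
def tInv : R3 := tp (-1)

/-- the element `u` of `R`. -/
def uR : R3 := AdjoinRoot.root threePoly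

/-- For `a : ℂ`, the `ℂ`-subalgebra of `ℂ(z)` generated by the elements `(z² - a²)^k` and
`z(z² - a²)^k` for all `k : ℤ`. -/
def Aa (a : ℂ) : Subalgebra ℂ (RatFunc ℂ) :=
  Algebra.adjoin ℂ
    {x : RatFunc ℂ | ∃ k : ℤ, x = (RatFunc.X ^ 2 - RatFunc.C (a ^ 2)) ^ k ∨
      x = RatFunc.X * (RatFunc.X ^ 2 - RatFunc.C (a ^ 2)) ^ k}

/-!
Put `t = (z - a)² / (2a(z + a))` and `u = (z - a)(z + 3a) / (2a(z + a))` in `ℂ(z)`; these are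
forced by `z = a(1 + t + u)` and `(z + a)⁻¹ = (t + 2 - u)/(4a)`. They satisfy `u² = t² + 4t`, so
`t ↦ t, u ↦ u` defines `ψ : R → ℂ(z)`, which sends the three prescribed elements to `z`,
`(z + a)⁻¹` and `(z - a)⁻¹`. As `t`, `t⁻¹` and `u` are polynomials in `z` and `(z² - a²)⁻¹`,
`A_a ⊆ ℂ[z, (z - a)⁻¹, (z + a)⁻¹] ⊆ im ψ ⊆ A_a`.

`ψ` is injective: `t` is not constant, hence transcendental, and `ψ(p + qu) = 0` for Laurent
polynomials `p, q` forces `p² = q²(t² + 4t)`, which is impossible unless `q = 0`, since after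
clearing denominators the root `0` has even multiplicity on the left and odd on the right.
-/

theorem Subalgebra.zpow_mem_of_inv_mem {K L : Type*} [CommSemiring K] [DivisionRing L]
    [Algebra K L] (S : Subalgebra K L) {x : L} (hx : x ∈ S) (hx' : x⁻¹ ∈ S) : ∀ n : ℤ, x ^ n ∈ S
  | (n : ℕ) => by simpa using pow_mem hx n
  | .negSucc n => by simpa [zpow_negSucc, ← inv_pow] using pow_mem hx' (n + 1)

theorem Polynomial.eq_zero_of_sq_mul_eq_sq_mul {R : Type*} [CommRing R] [IsDomain R]
    {p q f g : R[X]} (r : R) (hf : f ≠ 0) (hg : g ≠ 0)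
    (hfg : rootMultiplicity r f % 2 ≠ rootMultiplicity r g % 2) (h : p ^ 2 * f = q ^ 2 * g) :
    q = 0 := by
  by_contra hq
  have hp : p ≠ 0 := by
    rintro rfl
    simp [hq, hg] at h
  have hmul := congrArg (rootMultiplicity r) h
  rw [rootMultiplicity_mul (by positivity), rootMultiplicity_mul (by positivity), pow_two,
    pow_two, rootMultiplicity_mul (by positivity), rootMultiplicity_mul (by positivity)] at hmul
  omega

namespace LaurentPolynomial

section Aeval

variable {K L : Type*} [CommRing K] [CommRing L] [Algebra K L]

def aeval (x : Lˣ) : K[T;T⁻¹] →ₐ[K] L :=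
  { eval₂ (algebraMap K L) x with
    commutes' := fun c => by simp [algebraMap_apply] }

@[simp]
theorem aeval_T (x : Lˣ) (n : ℤ) : aeval (K := K) x (T n) = ((x ^ n : Lˣ) : L) :=
  eval₂_T _ _ n

@[simp]
theorem aeval_toLaurent (x : Lˣ) (p : K[X]) :
    aeval x (toLaurent p) = Polynomial.aeval (x : L) p :=
  (eval₂_toLaurent _ _ p).trans (Polynomial.aeval_def _ _).symm

theorem aeval_injective {x : Lˣ} (hx : Transcendental K (x : L)) :
    Function.Injective (aeval (K := K) x) := by
  rw [injective_iff_map_eq_zero]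
  intro f hf
  obtain ⟨n, f', hf'⟩ := exists_T_pow f
  have hf'0 : f' = 0 :=
    transcendental_iff.mp hx f' (by rw [← aeval_toLaurent, hf', map_mul, hf, zero_mul])
  rw [hf'0, map_zero, eq_comm] at hf'
  exact (isUnit_T _).mul_left_eq_zero.mp hf'

end Aeval

theorem aeval_mem {K L : Type*} [CommRing K] [Field L] [Algebra K L] {S : Subalgebra K L}
    {x : Lˣ} (hx : (x : L) ∈ S) (hx' : (x : L)⁻¹ ∈ S) (f : K[T;T⁻¹]) : aeval x f ∈ S := by
  induction f using LaurentPolynomial.induction_on' with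
  | add p q hp hq => rw [map_add]; exact add_mem hp hq
  | C_mul_T n c =>
    rw [map_mul, aeval_T, Units.val_zpow_eq_zpow_val, C_eq_algebraMap, AlgHom.commutes]
    exact mul_mem (S.algebraMap_mem c) (S.zpow_mem_of_inv_mem hx hx' n)

theorem eq_zero_of_sq_eq_sq_mul_T_two_add_four_T_one {K : Type*} [CommRing K] [IsDomain K]
    (h4 : (4 : K) ≠ 0) {p q : K[T;T⁻¹]} (h : p ^ 2 = q ^ 2 * (T 2 + 4 * T 1)) : q = 0 := by
  obtain ⟨m, P, hP⟩ := exists_T_pow p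
  obtain ⟨n, Q, hQ⟩ := exists_T_pow q
  have hPQ : P ^ 2 * Polynomial.X ^ (2 * n) =
      Q ^ 2 * (Polynomial.X ^ (2 * m + 1) * (Polynomial.X + Polynomial.C 4)) := by
    apply toLaurent_injective
    have hT (k : ℕ) : (T k : K[T;T⁻¹]) = T 1 ^ k := by rw [T_pow, mul_one]
    rw [hT m] at hP
    rw [hT n] at hQ
    rw [show (T 2 : K[T;T⁻¹]) = T 1 ^ 2 from hT 2] at h
    simp only [map_mul, map_pow, map_add, Polynomial.toLaurent_X, hP, hQ, map_ofNat]
    linear_combination (T 1 ^ m * T 1 ^ n) ^ 2 * h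
  have hX (k : ℕ) : rootMultiplicity 0 (Polynomial.X ^ k : K[X]) = k := by
    simpa using Polynomial.rootMultiplicity_X_sub_C_pow (0 : K) k
  have hQ0 : Q = 0 := by
    refine Polynomial.eq_zero_of_sq_mul_eq_sq_mul 0 (by simp)
      (mul_ne_zero (by simp) (Polynomial.X_add_C_ne_zero 4)) ?_ hPQ
    rw [Polynomial.rootMultiplicity_mul (mul_ne_zero (by simp) (Polynomial.X_add_C_ne_zero 4)),
      hX, hX, Polynomial.rootMultiplicity_eq_zero (by simp [h4])]
    omega
  rw [hQ0, map_zero, eq_comm] at hQ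
  exact (isUnit_T _).mul_left_eq_zero.mp hQ

end LaurentPolynomial

namespace AdjoinRoot

variable {S A L : Type*} [CommRing S] [CommRing A] [Nontrivial A] [CommRing L] [Algebra S A]
  [Algebra S L]

theorem exists_eq_of_add_of_mul_root (c : A) (x : AdjoinRoot (X ^ 2 - C c)) :
    ∃ p q : A, x = of _ p + of _ q * root _ := by
  have hmonic : (X ^ 2 - C c).Monic := monic_X_pow_sub_C c two_ne_zero
  obtain ⟨f, rfl⟩ := mk_surjective x
  have hdeg : (f %ₘ (X ^ 2 - C c)).degree ≤ 1 := by
    have := degree_modByMonic_lt f hmonic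
    rw [degree_X_pow_sub_C two_pos] at this
    exact Order.le_of_lt_succ this
  refine ⟨(f %ₘ (X ^ 2 - C c)).coeff 0, (f %ₘ (X ^ 2 - C c)).coeff 1, ?_⟩
  rw [← mk_leftInverse hmonic (mk _ f), modByMonicHom_mk, eq_X_add_C_of_degree_le_one hdeg]
  simp [add_comm]

theorem liftAlgHom_injective_of_sq {c : A} (i : A →ₐ[S] L) (hi : Function.Injective i) (y : L)
    (hy : (X ^ 2 - C c).eval₂ i y = 0) (hc : ∀ p q : A, p ^ 2 = q ^ 2 * c → q = 0) :
    Function.Injective (liftAlgHom (X ^ 2 - C c) i y hy) := by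
  have hy2 : y ^ 2 = i c := by simpa [sub_eq_zero] using hy
  rw [injective_iff_map_eq_zero]
  intro x hx
  obtain ⟨p, q, rfl⟩ := exists_eq_of_add_of_mul_root c x
  simp only [map_add, map_mul, liftAlgHom_of, liftAlgHom_root] at hx
  have hq : q = 0 := hc p q <| hi <| by
    rw [map_pow, map_mul, map_pow, eq_neg_of_add_eq_zero_left hx, ← hy2]; ring
  rw [hq, map_zero, zero_mul, add_zero, ← map_zero i] at hx
  simp [hi hx, hq]

end AdjoinRoot

namespace RatFunc

variable {K : Type*} [Field K]

theorem X_sub_C_ne_zero (c : K) : (X - C c : RatFunc K) ≠ 0 := by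
  rw [← algebraMap_X, ← algebraMap_C, ← map_sub]
  exact (map_ne_zero_iff _ (algebraMap_injective K)).mpr (Polynomial.X_sub_C_ne_zero c)

theorem X_add_C_ne_zero (c : K) : (X + C c : RatFunc K) ≠ 0 := by
  simpa using X_sub_C_ne_zero (-c)

theorem X_sq_sub_C_sq (c : K) : (X ^ 2 - C (c ^ 2) : RatFunc K) = (X - C c) * (X + C c) := by
  rw [map_pow]; ring

end RatFunc

namespace ThreePointAlgebra

def tFun (a : ℂ) : RatFunc ℂ :=
  (RatFunc.X - RatFunc.C a) ^ 2 / (2 * RatFunc.C a * (RatFunc.X + RatFunc.C a))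

def uFun (a : ℂ) : RatFunc ℂ :=
  (RatFunc.X - RatFunc.C a) * (RatFunc.X + 3 * RatFunc.C a) /
    (2 * RatFunc.C a * (RatFunc.X + RatFunc.C a))

variable {a : ℂ}

theorem uFun_sq : uFun a ^ 2 = tFun a ^ 2 + 4 * tFun a := by
  unfold tFun uFun
  field_simp [RatFunc.X_add_C_ne_zero]
  ring

theorem inv_tFun_eq : (tFun a)⁻¹ = 2 * RatFunc.C a * (RatFunc.X + RatFunc.C a) ^ 3 *
    (RatFunc.X ^ 2 - RatFunc.C (a ^ 2))⁻¹ ^ 2 := by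
  rw [tFun, RatFunc.X_sq_sub_C_sq]
  field_simp [RatFunc.X_add_C_ne_zero, RatFunc.X_sub_C_ne_zero]

theorem X_mem_Aa : RatFunc.X ∈ Aa a :=
  Algebra.subset_adjoin ⟨0, Or.inr (by simp)⟩

theorem inv_X_sq_sub_C_mem_Aa : (RatFunc.X ^ 2 - RatFunc.C (a ^ 2))⁻¹ ∈ Aa a :=
  Algebra.subset_adjoin ⟨-1, Or.inl (zpow_neg_one _).symm⟩

theorem Aa_le_adjoin : Aa a ≤ Algebra.adjoin ℂ
    {RatFunc.X, (RatFunc.X - RatFunc.C a)⁻¹, (RatFunc.X + RatFunc.C a)⁻¹} := by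
  set B := Algebra.adjoin ℂ
    {RatFunc.X, (RatFunc.X - RatFunc.C a)⁻¹, (RatFunc.X + RatFunc.C a)⁻¹}
  have hX : RatFunc.X ∈ B := Algebra.subset_adjoin (by simp)
  have hC (c : ℂ) : RatFunc.C c ∈ B := by simpa using B.algebraMap_mem c
  have hzpow (k : ℤ) : (RatFunc.X ^ 2 - RatFunc.C (a ^ 2)) ^ k ∈ B := by
    rw [RatFunc.X_sq_sub_C_sq, mul_zpow]
    exact mul_mem (B.zpow_mem_of_inv_mem (sub_mem hX (hC a)) (Algebra.subset_adjoin (by simp)) k)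
      (B.zpow_mem_of_inv_mem (add_mem hX (hC a)) (Algebra.subset_adjoin (by simp)) k)
  refine Algebra.adjoin_le ?_
  rintro _ ⟨k, rfl | rfl⟩
  · exact hzpow k
  · exact mul_mem hX (hzpow k)

variable (ha : a ≠ 0)
include ha

theorem C_mul_one_add_tFun_add_uFun : RatFunc.C a * (1 + tFun a + uFun a) = RatFunc.X := by
  unfold tFun uFun
  field_simp [RatFunc.X_add_C_ne_zero, ha]
  ring

theorem inv_four_C_mul_tFun_add_two_sub_uFun :
    (4 * RatFunc.C a)⁻¹ * (tFun a + 2 - uFun a) = (RatFunc.X + RatFunc.C a)⁻¹ := by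
  unfold tFun uFun
  field_simp [RatFunc.X_add_C_ne_zero, ha]
  ring

theorem inv_four_C_mul_inv_tFun_mul_uFun_sub_one :
    (4 * RatFunc.C a)⁻¹ * ((tFun a)⁻¹ * uFun a - 1) = (RatFunc.X - RatFunc.C a)⁻¹ := by
  unfold tFun uFun
  field_simp [RatFunc.X_add_C_ne_zero, RatFunc.X_sub_C_ne_zero, ha]
  ring

theorem tFun_eq : tFun a = (2 * RatFunc.C a)⁻¹ * (RatFunc.X - RatFunc.C a) ^ 3 *
    (RatFunc.X ^ 2 - RatFunc.C (a ^ 2))⁻¹ := by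
  rw [tFun, RatFunc.X_sq_sub_C_sq]
  field_simp [RatFunc.X_add_C_ne_zero, RatFunc.X_sub_C_ne_zero, ha]

theorem uFun_eq : uFun a = (2 * RatFunc.C a)⁻¹ *
    ((RatFunc.X - RatFunc.C a) ^ 2 * (RatFunc.X + 3 * RatFunc.C a)) *
      (RatFunc.X ^ 2 - RatFunc.C (a ^ 2))⁻¹ := by
  rw [uFun, RatFunc.X_sq_sub_C_sq]
  field_simp [RatFunc.X_add_C_ne_zero, RatFunc.X_sub_C_ne_zero, ha]

theorem intDegree_tFun : (tFun a).intDegree = 1 := by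
  have h2a : 2 * a ≠ 0 := by simpa using ha
  have htFun : tFun a = algebraMap ℂ[X] (RatFunc ℂ) ((X - C a) ^ 2) /
      algebraMap ℂ[X] (RatFunc ℂ) (C (2 * a) * (X + C a)) := by
    simp [tFun, RatFunc.algebraMap_X, RatFunc.algebraMap_C, map_ofNat RatFunc.C 2]
  rw [htFun, RatFunc.intDegree_div, RatFunc.intDegree_polynomial, RatFunc.intDegree_polynomial,
    natDegree_pow, natDegree_X_sub_C, natDegree_C_mul h2a, natDegree_X_add_C]
  · norm_num
  · exact (map_ne_zero_iff _ (RatFunc.algebraMap_injective ℂ)).mpr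
      (pow_ne_zero _ (X_sub_C_ne_zero a))
  · exact (map_ne_zero_iff _ (RatFunc.algebraMap_injective ℂ)).mpr
      (mul_ne_zero (C_ne_zero.mpr h2a) (X_add_C_ne_zero a))

theorem transcendental_tFun : Transcendental ℂ (tFun a) :=
  RatFunc.transcendental_of_ne_C _ fun ⟨c, hc⟩ => by
    simpa [hc, RatFunc.intDegree_C] using intDegree_tFun ha

theorem tFun_ne_zero : tFun a ≠ 0 := fun h => by
  simpa [h, RatFunc.intDegree_zero] using intDegree_tFun ha

def tUnit : (RatFunc ℂ)ˣ := Units.mk0 (tFun a) (tFun_ne_zero ha)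

theorem eval₂_threePoly_uFun :
    threePoly.eval₂ (LaurentPolynomial.aeval (K := ℂ) (tUnit ha) :
      LaurentPolynomial ℂ →+* RatFunc ℂ) (uFun a) = 0 := by
  simp [threePoly, tUnit, uFun_sq, map_ofNat]

def toRatFunc : R3 →ₐ[ℂ] RatFunc ℂ :=
  AdjoinRoot.liftAlgHom threePoly (LaurentPolynomial.aeval (tUnit ha)) (uFun a)
    (eval₂_threePoly_uFun ha)

theorem toRatFunc_of (p : LaurentPolynomial ℂ) :
    toRatFunc ha (AdjoinRoot.of threePoly p) = LaurentPolynomial.aeval (tUnit ha) p :=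
  AdjoinRoot.liftAlgHom_of _ _ _ _ p

theorem toRatFunc_tp (k : ℤ) : toRatFunc ha (tp k) = tFun a ^ k := by
  simp [tp, toRatFunc_of, tUnit]

theorem toRatFunc_uR : toRatFunc ha uR = uFun a := by
  simp [toRatFunc, uR]

theorem toRatFunc_injective : Function.Injective (toRatFunc ha) :=
  AdjoinRoot.liftAlgHom_injective_of_sq _
    (LaurentPolynomial.aeval_injective (by simpa [tUnit] using transcendental_tFun ha)) _ _
    fun _ _ h => LaurentPolynomial.eq_zero_of_sq_eq_sq_mul_T_two_add_four_T_one (by norm_num) h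

theorem range_toRatFunc_le : (toRatFunc ha).range ≤ Aa a := by
  have hX : RatFunc.X ∈ Aa a := X_mem_Aa
  have hw : (RatFunc.X ^ 2 - RatFunc.C (a ^ 2))⁻¹ ∈ Aa a := inv_X_sq_sub_C_mem_Aa
  have hC (c : ℂ) : RatFunc.C c ∈ Aa a := by simpa using (Aa a).algebraMap_mem c
  have hC2 : (2 * RatFunc.C a)⁻¹ ∈ Aa a := by simpa [map_ofNat RatFunc.C] using hC (2 * a)⁻¹
  have ht : tFun a ∈ Aa a := by
    rw [tFun_eq ha]
    exact mul_mem (mul_mem hC2 (pow_mem (sub_mem hX (hC a)) 3)) hw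
  have ht' : (tFun a)⁻¹ ∈ Aa a := by
    rw [inv_tFun_eq]
    exact mul_mem (mul_mem (mul_mem (ofNat_mem _ 2) (hC a)) (pow_mem (add_mem hX (hC a)) 3))
      (pow_mem hw 2)
  have hu : uFun a ∈ Aa a := by
    rw [uFun_eq ha]
    exact mul_mem (mul_mem hC2 (mul_mem (pow_mem (sub_mem hX (hC a)) 2)
      (add_mem hX (mul_mem (ofNat_mem _ 3) (hC a))))) hw
  rintro _ ⟨x, rfl⟩
  obtain ⟨p, q, hx⟩ : ∃ p q, x = AdjoinRoot.of threePoly p + AdjoinRoot.of threePoly q * uR :=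
    AdjoinRoot.exists_eq_of_add_of_mul_root _ x
  rw [AlgHom.toRingHom_eq_coe, RingHom.coe_coe, hx, map_add, map_mul, toRatFunc_of, toRatFunc_of,
    toRatFunc_uR]
  exact add_mem (LaurentPolynomial.aeval_mem (x := tUnit ha) ht ht' p)
    (mul_mem (LaurentPolynomial.aeval_mem (x := tUnit ha) ht ht' q) hu)

theorem toRatFunc_smul_one_add_tR_add_uR : toRatFunc ha (a • (1 + tR + uR)) = RatFunc.X := by
  rw [map_smul, map_add, map_add, map_one, tR, toRatFunc_tp, toRatFunc_uR, zpow_one,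
    Algebra.smul_def, RatFunc.algebraMap_eq_C, C_mul_one_add_tFun_add_uFun ha]

theorem toRatFunc_smul_tR_add_two_sub_uR :
    toRatFunc ha ((4 * a)⁻¹ • (tR + 2 - uR)) = (RatFunc.X + RatFunc.C a)⁻¹ := by
  rw [← inv_four_C_mul_tFun_add_two_sub_uFun ha]
  simp [tR, toRatFunc_tp, toRatFunc_uR, Algebra.smul_def, RatFunc.algebraMap_eq_C,
    map_ofNat RatFunc.C, map_ofNat (toRatFunc ha)]

theorem toRatFunc_smul_tInv_mul_uR_sub_one :
    toRatFunc ha ((4 * a)⁻¹ • (tInv * uR - 1)) = (RatFunc.X - RatFunc.C a)⁻¹ := by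
  rw [← inv_four_C_mul_inv_tFun_mul_uFun_sub_one ha]
  simp [tInv, toRatFunc_tp, toRatFunc_uR, Algebra.smul_def, RatFunc.algebraMap_eq_C,
    map_ofNat RatFunc.C]

theorem adjoin_le_range_toRatFunc : Algebra.adjoin ℂ
    {RatFunc.X, (RatFunc.X - RatFunc.C a)⁻¹, (RatFunc.X + RatFunc.C a)⁻¹} ≤
      (toRatFunc ha).range := by
  refine Algebra.adjoin_le ?_
  rintro _ (rfl | rfl | rfl)
  · exact ⟨_, toRatFunc_smul_one_add_tR_add_uR ha⟩
  · exact ⟨_, toRatFunc_smul_tInv_mul_uR_sub_one ha⟩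
  · exact ⟨_, toRatFunc_smul_tR_add_two_sub_uR ha⟩

end ThreePointAlgebra

open ThreePointAlgebra in
/-- For any nonzero `a ∈ ℂ`, the subalgebra `A_a` equals `ℂ[z, (z-a)⁻¹, (z+a)⁻¹]`, and `A_a` is
isomorphic as a `ℂ`-algebra to `R` via `z ↦ a(1 + t + u)`, `(z+a)⁻¹ ↦ (t + 2 - u)/(4a)`,
`(z-a)⁻¹ ↦ (t⁻¹u - 1)/(4a)`. -/
theorem stmt_1 (a : ℂ) (ha : a ≠ 0) :
    Aa a = Algebra.adjoin ℂ
        {RatFunc.X, (RatFunc.X - RatFunc.C a)⁻¹, (RatFunc.X + RatFunc.C a)⁻¹} ∧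
    ∃ e : Aa a ≃ₐ[ℂ] R3,
      (↑(e.symm (a • (1 + tR + uR))) : RatFunc ℂ) = RatFunc.X ∧
      (↑(e.symm ((4 * a)⁻¹ • (tR + 2 - uR))) : RatFunc ℂ) = (RatFunc.X + RatFunc.C a)⁻¹ ∧
      (↑(e.symm ((4 * a)⁻¹ • (tInv * uR - 1))) : RatFunc ℂ) = (RatFunc.X - RatFunc.C a)⁻¹ := by
  have hrange : (toRatFunc ha).range = Aa a :=
    le_antisymm (range_toRatFunc_le ha) (Aa_le_adjoin.trans (adjoin_le_range_toRatFunc ha))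
  refine ⟨le_antisymm Aa_le_adjoin ((adjoin_le_range_toRatFunc ha).trans hrange.le), ?_⟩
  let e : R3 ≃ₐ[ℂ] Aa a :=
    (AlgEquiv.ofInjective _ (toRatFunc_injective ha)).trans (Subalgebra.equivOfEq _ _ hrange)
  exact ⟨e.symm, toRatFunc_smul_one_add_tR_add_uR ha, toRatFunc_smul_tR_add_two_sub_uR ha,
    toRatFunc_smul_tInv_mul_uR_sub_one ha⟩
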